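/- arXiv:1809.06430 — 3 statements merged into one kernel-verified Lean document; each statement's English description precedes it below -/
import Mathlib

section
/- Let K₁ > 0, α ∈ [0, 1/2], dt > 0, dx > 0 with α = dt/dx², and f : ℝ → ℝ be K₁-Lipschitz. Let U : ℤ × ℕ → ℝ satisfy U(x, n+1) = α·U(x+1, n) + (1-2α)·U(x, n) + α·U(x-1, n) + dt·f(U(x, n)), and suppose |U(x+1, 0) - U(x, 0)| ≤ L·dx for all x. Then |U(x+1, n) - U(x, n)| ≤ L·exp(K₁·n·dt)·dx for all x, n; consequently |U(x, n) - U(y, n)| ≤ L·exp(K₁·n·dt)·|x - y|·dx for all x, y ∈ ℤ. -/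
theorem stmt_4 (K₁ α dt dx L : ℝ) (hK₁ : 0 < K₁) (hα0 : 0 ≤ α) (hα : α ≤ 1/2)
    (hdt : 0 < dt) (hdx : 0 < dx) (hαdef : α = dt / dx^2)
    (f : ℝ → ℝ) (hf : LipschitzWith (Real.toNNReal K₁) f)
    (U : ℤ × ℕ → ℝ)
    (hrec : ∀ (x : ℤ) (n : ℕ),
      U (x, n+1) = α * U (x+1, n) + (1 - 2*α) * U (x, n) + α * U (x-1, n) + dt * f (U (x, n)))
    (h0 : ∀ x : ℤ, |U (x+1, 0) - U (x, 0)| ≤ L * dx) :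
    (∀ (x : ℤ) (n : ℕ), |U (x+1, n) - U (x, n)| ≤ L * Real.exp (K₁ * n * dt) * dx) ∧
    (∀ (x y : ℤ) (n : ℕ),
      |U (x, n) - U (y, n)| ≤ L * Real.exp (K₁ * n * dt) * |(x : ℝ) - (y : ℝ)| * dx) := by
  have hL : 0 ≤ L := by
    have h := h0 0
    nlinarith [abs_nonneg (U (0+1, 0) - U (0, 0))]
  have hlip : ∀ a b : ℝ, |f a - f b| ≤ K₁ * |a - b| := by
    intro a b
    have h := hf.dist_le_mul a b
    rw [Real.dist_eq, Real.dist_eq] at h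
    simpa [Real.coe_toNNReal K₁ hK₁.le] using h
  have main : ∀ (n : ℕ) (x : ℤ), |U (x+1, n) - U (x, n)| ≤ L * Real.exp (K₁ * n * dt) * dx := by
    intro n
    induction n with
    | zero => intro x; simpa using h0 x
    | succ n ih =>
      intro x
      have e1 := hrec (x+1) n
      have e2 := hrec x n
      have h4 : (x+1-1 : ℤ) = x := by ring
      rw [h4] at e1
      have key : U (x+1, n+1) - U (x, n+1)
          = α * (U (x+1+1, n) - U (x+1, n)) + (1-2*α) * (U (x+1, n) - U (x, n))
            + α * (U (x, n) - U (x-1, n)) + dt * (f (U (x+1, n)) - f (U (x, n))) := by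
        rw [e1, e2]; ring
      have hA := ih (x+1)
      have hB := ih x
      have hC : |U (x, n) - U (x-1, n)| ≤ L * Real.exp (K₁ * n * dt) * dx := by
        have h := ih (x-1)
        have : (x-1+1 : ℤ) = x := by ring
        rwa [this] at h
      have hD := hlip (U (x+1, n)) (U (x, n))
      have hexp : 1 + K₁ * dt ≤ Real.exp (K₁ * dt) := by linarith [Real.add_one_le_exp (K₁ * dt)]
      have h2α : 0 ≤ 1 - 2*α := by linarith
      have hep : (0:ℝ) < Real.exp (K₁ * n * dt) := Real.exp_pos _
      set A₁ := U (x+1+1, n) - U (x+1, n)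
      set A₂ := U (x+1, n) - U (x, n)
      set A₃ := U (x, n) - U (x-1, n)
      set A₄ := f (U (x+1, n)) - f (U (x, n))
      have tri : |α * A₁ + (1-2*α) * A₂ + α * A₃ + dt * A₄|
          ≤ α * |A₁| + (1-2*α) * |A₂| + α * |A₃| + dt * |A₄| := by
        have t1 := abs_add_le (α * A₁ + (1-2*α) * A₂ + α * A₃) (dt * A₄)
        have t2 := abs_add_le (α * A₁ + (1-2*α) * A₂) (α * A₃)
        have t3 := abs_add_le (α * A₁) ((1-2*α) * A₂)
        simp only [abs_mul, abs_of_nonneg hα0, abs_of_nonneg h2α, abs_of_nonneg hdt.le]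
          at t1 t2 t3
        linarith
      have hEcast : Real.exp (K₁ * ((n:ℝ)+1) * dt)
          = Real.exp (K₁ * dt) * Real.exp (K₁ * n * dt) := by
        rw [← Real.exp_add]; ring_nf
      calc |U (x+1, n+1) - U (x, n+1)|
          = |α * A₁ + (1-2*α) * A₂ + α * A₃ + dt * A₄| := by rw [key]
        _ ≤ α * |A₁| + (1-2*α) * |A₂| + α * |A₃| + dt * |A₄| := tri
        _ ≤ Real.exp (K₁ * dt) * (L * Real.exp (K₁ * n * dt) * dx) := by
            nlinarith [mul_le_mul_of_nonneg_left hA hα0,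
              mul_le_mul_of_nonneg_left hB h2α,
              mul_le_mul_of_nonneg_left hC hα0,
              mul_le_mul_of_nonneg_left hD hdt.le,
              mul_le_mul_of_nonneg_left hB (by positivity : (0:ℝ) ≤ dt * K₁),
              mul_le_mul_of_nonneg_right hexp
                (by positivity : (0:ℝ) ≤ L * Real.exp (K₁ * n * dt) * dx)]
        _ = L * Real.exp (K₁ * (↑(n+1):ℝ) * dt) * dx := by push_cast; rw [hEcast]; ring
  refine ⟨fun x n => main n x, ?_⟩
  have step : ∀ (n : ℕ) (y : ℤ) (k : ℕ),
      |U (y + (k:ℤ), n) - U (y, n)| ≤ L * Real.exp (K₁ * n * dt) * (k:ℝ) * dx := by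
    intro n y k
    induction k with
    | zero => simp
    | succ k ih =>
      have h1 := main n (y + (k:ℤ))
      have hcast : (y + ((k+1:ℕ):ℤ)) = (y + (k:ℤ)) + 1 := by push_cast; ring
      calc |U (y + ((k+1:ℕ):ℤ), n) - U (y, n)|
          = |(U (y + (k:ℤ) + 1, n) - U (y + (k:ℤ), n)) + (U (y + (k:ℤ), n) - U (y, n))| := by
            rw [hcast]; ring_nf
        _ ≤ |U (y + (k:ℤ) + 1, n) - U (y + (k:ℤ), n)| + |U (y + (k:ℤ), n) - U (y, n)| :=
            abs_add_le _ _
        _ ≤ L * Real.exp (K₁ * n * dt) * dx + L * Real.exp (K₁ * n * dt) * (k:ℝ) * dx := by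
            linarith
        _ = L * Real.exp (K₁ * n * dt) * ((k+1:ℕ):ℝ) * dx := by push_cast; ring
  intro x y n
  rcases le_total y x with h | h
  · have hk : x = y + ((x - y).toNat : ℤ) := by
      rw [Int.toNat_of_nonneg (by omega)]; ring
    have hs := step n y (x - y).toNat
    rw [← hk] at hs
    have habs : |(x:ℝ) - (y:ℝ)| = ((x - y).toNat : ℝ) := by
      have h2 : ((x - y).toNat : ℤ) = x - y := Int.toNat_of_nonneg (by omega)
      have h3 : ((x - y).toNat : ℝ) = ((x - y : ℤ) : ℝ) := by exact_mod_cast h2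
      rw [abs_of_nonneg (sub_nonneg.mpr (by exact_mod_cast h)), h3]; push_cast; ring
    rw [habs]
    linarith
  · have hk : y = x + ((y - x).toNat : ℤ) := by
      rw [Int.toNat_of_nonneg (by omega)]; ring
    have hs := step n x (y - x).toNat
    rw [← hk] at hs
    have habs : |(x:ℝ) - (y:ℝ)| = ((y - x).toNat : ℝ) := by
      have h2 : ((y - x).toNat : ℤ) = y - x := Int.toNat_of_nonneg (by omega)
      have h3 : ((y - x).toNat : ℝ) = ((y - x : ℤ) : ℝ) := by exact_mod_cast h2
      rw [abs_sub_comm, abs_of_nonneg (sub_nonneg.mpr (by exact_mod_cast h)), h3]; push_cast; ring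
    rw [habs, abs_sub_comm]
    linarith
end

section
/- Let U : ℤ × ℕ → ℝ be defined on a grid with spacings dx, dt > 0, α = dt/dx² ≤ 1/2. Suppose |U(x, n) - U(y, n)| ≤ L̄·|x - y|·dx for all x, y, n with n·dt ≤ t̄, and |f(U(x, n))| ≤ A whenever n·dt ≤ t̄, where U satisfies U(x, n+1) = α·U(x+1, n) + (1-2α)·U(x, n) + α·U(x-1, n) + dt·f(U(x, n)). Then for all grid times t₀ = n₀·dt ≤ t₁ = n₁·dt ≤ t̄ and all x₀, |U(x₀, n₁) - U(x₀, n₀)| ≤ ((A+1)·√t̄ + 2·L̄)·√(t₁ - t₀). -/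
/-!
The explicit scheme with `α ≤ 1/2` is monotone, and the discrete heat operator maps the parabola
`b/2 · ((x - x₀) dx)²` to itself plus `b dt`. Hence `U(x₀, n₀) + (b + A)(t - t₀) + b/2 ((x - x₀) dx)² + L̄²/(2b)`
is a supersolution which, by the Lipschitz bound and AM-GM, lies above `U` at time `t₀`; it stays above `U`
up to time `t₁`. Doing the same for `-U` and choosing `b = (L̄ + √t̄)/√(t₁ - t₀)` gives the Hölder bound.
-/

open Real

section Scheme

variable {α dt dx : ℝ} {f : ℝ → ℝ} {U : ℤ × ℕ → ℝ}

lemma scheme_le_of_le (hα0 : 0 ≤ α) (hα : α ≤ 1/2)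
    (hrec : ∀ (x : ℤ) (n : ℕ),
      U (x, n+1) = α * U (x+1, n) + (1 - 2*α) * U (x, n) + α * U (x-1, n) + dt * f (U (x, n)))
    {W : ℤ → ℝ} {n : ℕ} (hW : ∀ y, U (y, n) ≤ W y) (x : ℤ) :
    U (x, n+1) ≤ α * W (x+1) + (1 - 2*α) * W x + α * W (x-1) + dt * f (U (x, n)) := by
  have : 0 ≤ 1 - 2*α := by linarith
  rw [hrec]
  gcongr <;> exact hW _

lemma scheme_parabola (hαdx : α * dx^2 = dt) (c b x x₀ : ℝ) :
    α * (c + b/2 * ((x + 1 - x₀) * dx)^2) + (1 - 2*α) * (c + b/2 * ((x - x₀) * dx)^2)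
      + α * (c + b/2 * ((x - 1 - x₀) * dx)^2) = c + b/2 * ((x - x₀) * dx)^2 + b * dt := by
  linear_combination b * hαdx

lemma mul_le_half_mul_sq_add_sq_div (L r : ℝ) {b : ℝ} (hb : 0 < b) :
    L * r ≤ b/2 * r^2 + L^2 / (2*b) := by
  have key : b/2 * r^2 + L^2 / (2*b) - L * r = (b*r - L)^2 / (2*b) := by
    field_simp
    ring
  linarith [div_nonneg (sq_nonneg (b*r - L)) (by positivity : (0:ℝ) ≤ 2*b)]

lemma sub_le_of_parabolic_barrier {L A b : ℝ} (hα0 : 0 ≤ α) (hα : α ≤ 1/2) (hdt : 0 ≤ dt)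
    (hαdx : α * dx^2 = dt) (hb : 0 < b)
    (hrec : ∀ (x : ℤ) (n : ℕ),
      U (x, n+1) = α * U (x+1, n) + (1 - 2*α) * U (x, n) + α * U (x-1, n) + dt * f (U (x, n)))
    {x₀ : ℤ} {n₀ k : ℕ}
    (hLip : ∀ x : ℤ, U (x, n₀) - U (x₀, n₀) ≤ L * |(x : ℝ) - x₀| * dx)
    (hf : ∀ (x : ℤ) (j : ℕ), j < k → f (U (x, n₀ + j)) ≤ A) :
    U (x₀, n₀ + k) - U (x₀, n₀) ≤ (b + A) * (k * dt) + L^2 / (2*b) := by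
  suffices barrier : ∀ j ≤ k, ∀ x : ℤ, U (x, n₀ + j) ≤
      U (x₀, n₀) + L^2 / (2*b) + (b + A) * (j * dt) + b/2 * (((x : ℝ) - x₀) * dx)^2 by
    linarith [by simpa using barrier k le_rfl x₀]
  intro j
  induction j with
  | zero =>
    intro _ x
    have hamgm := mul_le_half_mul_sq_add_sq_div L (|(x : ℝ) - x₀| * dx) hb
    rw [mul_pow, sq_abs, ← mul_pow] at hamgm
    simp only [add_zero, CharP.cast_eq_zero, zero_mul, mul_zero]
    linarith [hLip x, mul_assoc L |(x : ℝ) - x₀| dx]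
  | succ j ih =>
    intro hj x
    have hstep := scheme_le_of_le hα0 hα hrec (ih (by omega)) x
    have hpar := scheme_parabola hαdx (U (x₀, n₀) + L^2 / (2*b) + (b + A) * (j * dt)) b x x₀
    have hforce := mul_le_mul_of_nonneg_left (hf x j (by omega)) hdt
    push_cast at hstep ⊢
    rw [← add_assoc]
    linarith

lemma abs_sub_le_of_parabolic_barrier {L A b : ℝ} (hα0 : 0 ≤ α) (hα : α ≤ 1/2) (hdt : 0 ≤ dt)
    (hαdx : α * dx^2 = dt) (hb : 0 < b)
    (hrec : ∀ (x : ℤ) (n : ℕ),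
      U (x, n+1) = α * U (x+1, n) + (1 - 2*α) * U (x, n) + α * U (x-1, n) + dt * f (U (x, n)))
    {x₀ : ℤ} {n₀ k : ℕ}
    (hLip : ∀ x : ℤ, |U (x, n₀) - U (x₀, n₀)| ≤ L * |(x : ℝ) - x₀| * dx)
    (hf : ∀ (x : ℤ) (j : ℕ), j < k → |f (U (x, n₀ + j))| ≤ A) :
    |U (x₀, n₀ + k) - U (x₀, n₀)| ≤ (b + A) * (k * dt) + L^2 / (2*b) := by
  have upper := sub_le_of_parabolic_barrier hα0 hα hdt hαdx hb hrec
    (fun x => (abs_le.mp (hLip x)).2) (fun x j hj => (abs_le.mp (hf x j hj)).2)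
  have lower := sub_le_of_parabolic_barrier (U := fun p => -U p) (f := fun y => -f (-y))
    (L := L) (A := A) (x₀ := x₀) (n₀ := n₀) (k := k)
    hα0 hα hdt hαdx hb (fun x n => by simp only [neg_neg, hrec]; ring)
    (fun x => by linarith [(abs_le.mp (hLip x)).1])
    (fun x j hj => by simpa only [neg_neg, neg_le] using (abs_le.mp (hf x j hj)).1)
  rw [abs_le]
  constructor <;> linarith

end Scheme

lemma le_mul_sqrt_of_forall_pos_le {D Δ T L A : ℝ} (hΔ : 0 < Δ) (hΔT : Δ ≤ T) (hL : 0 ≤ L)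
    (hA : 0 ≤ A) (h : ∀ b > 0, D ≤ (b + A) * Δ + L^2 / (2*b)) :
    D ≤ ((A + 1) * √T + 2 * L) * √Δ := by
  set s := √Δ
  set t := √T
  have hs : 0 < s := sqrt_pos.mpr hΔ
  have hst : s ≤ t := sqrt_le_sqrt hΔT
  have hsΔ : s^2 = Δ := sq_sqrt hΔ.le
  have hLt : 0 < L + t := by linarith
  have hb : 0 < (L + t) / s := div_pos hLt hs
  have hbΔ : ((L + t) / s + A) * Δ = (L + t) * s + A * s^2 := by
    rw [← hsΔ]; field_simp
  have hLsq : L^2 / (2 * ((L + t) / s)) ≤ L * s / 2 := by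
    rw [mul_div_assoc', div_div_eq_mul_div, div_le_div_iff₀ (by positivity) (by norm_num)]
    nlinarith [mul_nonneg (mul_nonneg hL hs.le) (hs.le.trans hst)]
  have hAs : A * s^2 ≤ A * t * s := by
    rw [sq, mul_assoc]; gcongr
  nlinarith [h _ hb]

theorem stmt_7_general (dx dt α Lbar A tbar : ℝ) (hdx : 0 < dx) (hdt : 0 < dt)
    (hαdef : α = dt / dx^2) (hα : α ≤ 1/2) (hL : 0 ≤ Lbar) (hA : 0 ≤ A)
    (f : ℝ → ℝ) (U : ℤ × ℕ → ℝ)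
    (hrec : ∀ (x : ℤ) (n : ℕ),
      U (x, n+1) = α * U (x+1, n) + (1 - 2*α) * U (x, n) + α * U (x-1, n) + dt * f (U (x, n)))
    (hLip : ∀ (x y : ℤ) (n : ℕ), (n : ℝ) * dt ≤ tbar →
      |U (x, n) - U (y, n)| ≤ Lbar * |(x : ℝ) - (y : ℝ)| * dx)
    (hfA : ∀ (x : ℤ) (n : ℕ), (n : ℝ) * dt ≤ tbar → |f (U (x, n))| ≤ A) :
    ∀ (x₀ : ℤ) (n₀ n₁ : ℕ), n₀ ≤ n₁ → (n₁ : ℝ) * dt ≤ tbar →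
      |U (x₀, n₁) - U (x₀, n₀)| ≤
        ((A + 1) * Real.sqrt tbar + 2 * Lbar) * Real.sqrt ((n₁ : ℝ) * dt - (n₀ : ℝ) * dt) := by
  intro x₀ n₀ n₁ hn ht
  obtain ⟨k, rfl⟩ := Nat.exists_eq_add_of_le hn
  rcases k.eq_zero_or_pos with rfl | hk
  · simp
  have hα0 : 0 ≤ α := hαdef ▸ by positivity
  have hαdx : α * dx^2 = dt := by rw [hαdef]; field_simp
  have hbefore : ∀ j ≤ k, ((n₀ + j : ℕ) : ℝ) * dt ≤ tbar := fun j hj =>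
    le_trans (by gcongr) ht
  have hΔ : ((n₀ + k : ℕ) : ℝ) * dt - n₀ * dt = k * dt := by push_cast; ring
  rw [hΔ]
  refine le_mul_sqrt_of_forall_pos_le (by positivity) ?_ hL hA fun b hb => ?_
  · linarith [show (0 : ℝ) ≤ n₀ * dt by positivity]
  exact abs_sub_le_of_parabolic_barrier hα0 hα hdt.le hαdx hb hrec
    (fun x => hLip x x₀ n₀ (by simpa using hbefore 0 k.zero_le))
    (fun x j hj => hfA x (n₀ + j) (hbefore j hj.le))

theorem stmt_7 (dx dt α Lbar A tbar : ℝ) (hdx : 0 < dx) (hdt : 0 < dt)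
    (hαdef : α = dt / dx^2) (hα : α ≤ 1/2) (hL : 0 ≤ Lbar) (hA : 0 ≤ A) (htbar : 0 < tbar)
    (f : ℝ → ℝ) (U : ℤ × ℕ → ℝ)
    (hrec : ∀ (x : ℤ) (n : ℕ),
      U (x, n+1) = α * U (x+1, n) + (1 - 2*α) * U (x, n) + α * U (x-1, n) + dt * f (U (x, n)))
    (hLip : ∀ (x y : ℤ) (n : ℕ), (n : ℝ) * dt ≤ tbar →
      |U (x, n) - U (y, n)| ≤ Lbar * |(x : ℝ) - (y : ℝ)| * dx)
    (hfA : ∀ (x : ℤ) (n : ℕ), (n : ℝ) * dt ≤ tbar → |f (U (x, n))| ≤ A) :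
    ∀ (x₀ : ℤ) (n₀ n₁ : ℕ), n₀ ≤ n₁ → (n₁ : ℝ) * dt ≤ tbar →
      |U (x₀, n₁) - U (x₀, n₀)| ≤
        ((A + 1) * Real.sqrt tbar + 2 * Lbar) * Real.sqrt ((n₁ : ℝ) * dt - (n₀ : ℝ) * dt) :=
  stmt_7_general dx dt α Lbar A tbar hdx hdt hαdef hα hL hA f U hrec hLip hfA
end

section
/- Let U : ℤ × ℕ → ℝ solve the explicit heat scheme U(x, n+1) = α·U(x+1, n) + (1-2α)·U(x, n) + α·U(x-1, n) with α ∈ [0, 1/2], started from U(x, 0) = u₀(x·dx) where u₀ : ℝ → ℝ is L-Lipschitz. Also define V(x, n) = (U(x+1, n) − U(x, n))/dx. Then V satisfies the same heat scheme recursion, and |V(x, n)| ≤ L for all x, n. -/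
theorem stmt_17 (α dx L : ℝ) (hα0 : 0 ≤ α) (hα : α ≤ 1/2) (hdx : 0 < dx) (hL : 0 ≤ L)
    (u₀ : ℝ → ℝ) (hu₀ : ∀ x y : ℝ, |u₀ x - u₀ y| ≤ L * |x - y|)
    (U : ℤ × ℕ → ℝ)
    (hrec : ∀ (x : ℤ) (n : ℕ),
      U (x, n+1) = α * U (x+1, n) + (1 - 2*α) * U (x, n) + α * U (x-1, n))
    (h0 : ∀ x : ℤ, U (x, 0) = u₀ ((x : ℝ) * dx))
    (V : ℤ × ℕ → ℝ)
    (hV : ∀ (x : ℤ) (n : ℕ), V (x, n) = (U (x+1, n) - U (x, n)) / dx) :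
    (∀ (x : ℤ) (n : ℕ),
      V (x, n+1) = α * V (x+1, n) + (1 - 2*α) * V (x, n) + α * V (x-1, n)) ∧
    (∀ (x : ℤ) (n : ℕ), |V (x, n)| ≤ L) := by
  have hVrec : ∀ (x : ℤ) (n : ℕ),
      V (x, n+1) = α * V (x+1, n) + (1 - 2*α) * V (x, n) + α * V (x-1, n) := by
    intro x n
    have h1 : x + 1 + 1 = x + 2 := by ring
    have h2 : x + 1 - 1 = x := by ring
    rw [hV, hV, hV, hV, hrec, hrec, h1, h2]
    field_simp
    ring
  refine ⟨hVrec, ?_⟩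
  intro x n
  induction n generalizing x with
  | zero =>
    rw [hV, abs_div, abs_of_pos hdx, div_le_iff₀ hdx, h0, h0]
    calc |u₀ ((↑(x+1):ℝ) * dx) - u₀ ((x:ℝ) * dx)| ≤ L * |(↑(x+1):ℝ) * dx - (x:ℝ) * dx| :=
          hu₀ _ _
      _ = L * dx := by
          push_cast
          rw [show ((x:ℝ)+1) * dx - (x:ℝ) * dx = dx by ring, abs_of_pos hdx]
  | succ n ih =>
    rw [hVrec]
    have h1 := ih (x+1)
    have h2 := ih x
    have h3 := ih (x-1)
    have hα2 : 1 - 2*α ≥ 0 := by linarith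
    calc |α * V (x+1, n) + (1 - 2*α) * V (x, n) + α * V (x-1, n)|
        ≤ α * |V (x+1, n)| + (1 - 2*α) * |V (x, n)| + α * |V (x-1, n)| := by
          calc _ ≤ |α * V (x+1, n) + (1 - 2*α) * V (x, n)| + |α * V (x-1, n)| := abs_add_le _ _
            _ ≤ |α * V (x+1, n)| + |(1 - 2*α) * V (x, n)| + |α * V (x-1, n)| := by
                gcongr; exact abs_add_le _ _
            _ = α * |V (x+1, n)| + (1 - 2*α) * |V (x, n)| + α * |V (x-1, n)| := by
                rw [abs_mul, abs_mul, abs_mul, abs_of_nonneg hα0, abs_of_nonneg hα2]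
      _ ≤ α * L + (1 - 2*α) * L + α * L := by gcongr
      _ = L := by ring
end
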